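/- arXiv:1409.2214 — 3 statements merged into one kernel-verified Lean document; each statement's English description precedes it below -/
import Mathlib

section
/- Let A and B be N×N real symmetric matrices with eigenvalues λ^A_1 ≤ λ^A_2 ≤ ... ≤ λ^A_N and λ^B_1 ≤ λ^B_2 ≤ ... ≤ λ^B_N respectively (listed with multiplicity in increasing order). Then ∑_{i=1}^N |λ^A_i − λ^B_i|² ≤ tr((A−B)²). -/
/-!
Diagonalise `A = U diag(α) Uᵀ` and `B = V diag(β) Vᵀ` orthogonally. With `W = UᵀV`,
`tr (A B) = ∑ᵢⱼ αᵢ βⱼ Wᵢⱼ²`, and `(Wᵢⱼ²)` is doubly stochastic because `W` is orthogonal.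
By Birkhoff's theorem the linear function `S ↦ α ⬝ S β` attains its maximum over doubly
stochastic matrices at a permutation matrix, and by the rearrangement inequality
`∑ᵢ αᵢ β_{σ i}` is largest when both lists are sorted the same way. Hence
`tr (A B) ≤ ∑ᵢ λᴬᵢ λᴮᵢ`, and the theorem follows from
`tr ((A - B)²) = tr A² - 2 tr (A B) + tr B²` with `tr A² = ∑ᵢ (λᴬᵢ)²`.
-/

open Finset Matrix Polynomial

theorem Fin.exists_perm_eq_comp_of_map_univ_eq {α : Type*} [LinearOrder α] {n : ℕ}
    {f g : Fin n → α} (h : univ.val.map f = univ.val.map g) :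
    ∃ σ : Equiv.Perm (Fin n), f = g ∘ σ := by
  have hsort : f ∘ Tuple.sort f = g ∘ Tuple.sort g := by
    refine List.ofFn_injective <| List.Perm.eq_of_sortedLE (Tuple.monotone_sort f).sortedLE_ofFn
      (Tuple.monotone_sort g).sortedLE_ofFn ?_
    rw [Fin.univ_val_map, Fin.univ_val_map, Multiset.coe_eq_coe] at h
    exact ((Tuple.sort f).ofFn_comp_perm f).trans (h.trans ((Tuple.sort g).ofFn_comp_perm g).symm)
  refine ⟨(Tuple.sort f).symm.trans (Tuple.sort g), funext fun i => ?_⟩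
  simpa using congrFun hsort ((Tuple.sort f).symm i)

theorem Monovary.sum_comp_perm_mul_comp_perm_le_sum_mul {ι α : Type*} [Fintype ι] [Semiring α]
    [LinearOrder α] [IsStrictOrderedRing α] [ExistsAddOfLE α] {f g : ι → α}
    (hfg : Monovary f g) (σ τ : Equiv.Perm ι) : ∑ i, f (σ i) * g (τ i) ≤ ∑ i, f i * g i := by
  rw [← Equiv.sum_comp σ.symm]
  simpa using hfg.sum_mul_comp_perm_le_sum_mul (σ := σ.symm.trans τ)

namespace Matrix

variable {n : Type*} [Fintype n] [DecidableEq n]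

theorem trace_diagonal_mul_mul_diagonal_mul_transpose {R : Type*} [CommSemiring R]
    (a b : n → R) (W : Matrix n n R) :
    (diagonal a * W * diagonal b * Wᵀ).trace = a ⬝ᵥ (W ⊙ W) *ᵥ b := by
  simp only [trace, diag_apply, mul_apply, diagonal_apply, dotProduct, mulVec, hadamard_apply,
    transpose_apply, ite_mul, zero_mul, sum_ite_eq, mem_univ, if_true, mul_ite, mul_zero,
    sum_ite_eq', mul_sum]
  exact sum_congr rfl fun i _ => sum_congr rfl fun j _ => by ring

theorem hadamard_self_mem_doublyStochastic {R : Type*} [CommRing R] [LinearOrder R]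
    [IsStrictOrderedRing R] [StarRing R] [TrivialStar R] {W : Matrix n n R}
    (hW : W ∈ unitaryGroup n R) :
    W ⊙ W ∈ doublyStochastic R n := by
  rw [mem_doublyStochastic_iff_sum]
  refine ⟨fun i j => mul_self_nonneg _, fun i => ?_, fun j => ?_⟩
  · simpa [mul_apply] using congrFun (congrFun (mem_unitaryGroup_iff.mp hW) i) i
  · simpa [mul_apply] using congrFun (congrFun (mem_unitaryGroup_iff'.mp hW) j) j

theorem exists_perm_dotProduct_mulVec_le_of_mem_doublyStochastic {𝕜 : Type*} [Field 𝕜]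
    [LinearOrder 𝕜] [IsStrictOrderedRing 𝕜] {S : Matrix n n 𝕜} (hS : S ∈ doublyStochastic 𝕜 n)
    (a b : n → 𝕜) :
    ∃ σ : Equiv.Perm n, a ⬝ᵥ S *ᵥ b ≤ a ⬝ᵥ (b ∘ σ) := by
  rw [← SetLike.mem_coe, doublyStochastic_eq_convexHull_permMatrix] at hS
  have hconvex : ConvexOn 𝕜 Set.univ (fun M : Matrix n n 𝕜 => a ⬝ᵥ M *ᵥ b) :=
    ⟨convex_univ, fun _ _ _ _ _ _ _ _ _ => le_of_eq <| by
      simp [add_mulVec, smul_mulVec, dotProduct_add, dotProduct_smul]⟩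
  obtain ⟨_, ⟨σ, rfl⟩, hσ⟩ := hconvex.exists_ge_of_mem_convexHull (Set.subset_univ _) hS
  exact ⟨σ, by rwa [permMatrix_mulVec] at hσ⟩

theorem trace_mul_eq_dotProduct_hadamard_mulVec {R : Type*} [CommRing R] [StarRing R]
    [TrivialStar R] {A B : Matrix n n R} {U V : unitaryGroup n R} {a b : n → R}
    (hA : A = U * diagonal a * star (U : Matrix n n R))
    (hB : B = V * diagonal b * star (V : Matrix n n R)) :
    let W : Matrix n n R := (star U * V : unitaryGroup n R)
    (A * B).trace = a ⬝ᵥ (W ⊙ W) *ᵥ b := by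
  intro W
  have hWT : Wᵀ = star (V : Matrix n n R) * U := by
    rw [← conjTranspose_eq_transpose_of_trivial, ← star_eq_conjTranspose]
    simp [W, star_mul]
  have hAB : A * B = U * (diagonal a * W * diagonal b * Wᵀ) * star (U : Matrix n n R) := by
    rw [hWT]
    simp only [hA, hB, W, Submonoid.coe_mul, Unitary.coe_star, Matrix.mul_assoc,
      Unitary.mul_star_self_of_mem U.2, Matrix.mul_one]
  rw [← trace_diagonal_mul_mul_diagonal_mul_transpose, hAB, trace_mul_cycle,
    Unitary.coe_star_mul_self, Matrix.one_mul]

namespace IsHermitian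

theorem eq_eigenvectorUnitary_mul_diagonal_mul_star {A : Matrix n n ℝ} (hA : A.IsHermitian) :
    A = (hA.eigenvectorUnitary : Matrix n n ℝ) * diagonal hA.eigenvalues *
      star (hA.eigenvectorUnitary : Matrix n n ℝ) := by
  conv_lhs => rw [hA.spectral_theorem, Unitary.conjStarAlgAut_apply]
  simp [RCLike.ofReal_real_eq_id]

theorem trace_mul_self_eq_sum_eigenvalues_sq {A : Matrix n n ℝ} (hA : A.IsHermitian) :
    (A * A).trace = ∑ i, hA.eigenvalues i ^ 2 := by
  have hdiag := hA.eq_eigenvectorUnitary_mul_diagonal_mul_star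
  rw [trace_mul_eq_dotProduct_hadamard_mulVec hdiag hdiag]
  simp [hadamard_one, sq, dotProduct]

theorem exists_mem_doublyStochastic_trace_mul_eq {A B : Matrix n n ℝ} (hA : A.IsHermitian)
    (hB : B.IsHermitian) :
    ∃ S ∈ doublyStochastic ℝ n, (A * B).trace = hA.eigenvalues ⬝ᵥ S *ᵥ hB.eigenvalues :=
  ⟨_, hadamard_self_mem_doublyStochastic (star hA.eigenvectorUnitary * hB.eigenvectorUnitary).2,
    trace_mul_eq_dotProduct_hadamard_mulVec hA.eq_eigenvectorUnitary_mul_diagonal_mul_star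
      hB.eq_eigenvectorUnitary_mul_diagonal_mul_star⟩

variable {N : ℕ} {A B : Matrix (Fin N) (Fin N) ℝ}

theorem exists_perm_eigenvalues_eq_comp (hA : A.IsHermitian) {a : Fin N → ℝ}
    (hchA : A.charpoly = ∏ i, (X - C (a i))) :
    ∃ σ : Equiv.Perm (Fin N), hA.eigenvalues = a ∘ σ := by
  have hroots (u : Fin N → ℝ) : (∏ i, (X - C (u i))).roots = univ.val.map u := by
    rw [← roots_multiset_prod_X_sub_C (univ.val.map u), Multiset.map_map]
    rfl
  refine Fin.exists_perm_eq_comp_of_map_univ_eq ?_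
  rw [← hroots, ← hroots, ← hchA, hA.charpoly_eq]
  simp

theorem trace_mul_self_eq_sum_sq (hA : A.IsHermitian) {a : Fin N → ℝ}
    (hchA : A.charpoly = ∏ i, (X - C (a i))) :
    (A * A).trace = ∑ i, a i ^ 2 := by
  obtain ⟨σ, hσ⟩ := hA.exists_perm_eigenvalues_eq_comp hchA
  rw [hA.trace_mul_self_eq_sum_eigenvalues_sq, hσ]
  exact Equiv.sum_comp σ (a · ^ 2)

theorem trace_mul_le_sum_mul (hA : A.IsHermitian) (hB : B.IsHermitian) {a b : Fin N → ℝ}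
    (hab : Monovary a b) (hchA : A.charpoly = ∏ i, (X - C (a i)))
    (hchB : B.charpoly = ∏ i, (X - C (b i))) :
    (A * B).trace ≤ ∑ i, a i * b i := by
  obtain ⟨σ, hσ⟩ := hA.exists_perm_eigenvalues_eq_comp hchA
  obtain ⟨τ, hτ⟩ := hB.exists_perm_eigenvalues_eq_comp hchB
  obtain ⟨S, hS, htrace⟩ := hA.exists_mem_doublyStochastic_trace_mul_eq hB
  obtain ⟨π, hπ⟩ := exists_perm_dotProduct_mulVec_le_of_mem_doublyStochastic hS
    hA.eigenvalues hB.eigenvalues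
  calc (A * B).trace ≤ ∑ i, a (σ i) * b ((π.trans τ) i) := by
        rw [htrace]
        simpa [hσ, hτ, dotProduct] using hπ
    _ ≤ ∑ i, a i * b i := hab.sum_comp_perm_mul_comp_perm_le_sum_mul σ (π.trans τ)

end IsHermitian

end Matrix

open Polynomial in
/-- **Hoffman–Wielandt inequality.** If `A, B` are real symmetric `N × N` matrices with
eigenvalues (with multiplicity, in nondecreasing order) `lA` and `lB`, then
`∑ i, |lA i - lB i|² ≤ tr((A - B)²)`. -/
theorem hoffman_wielandt (N : ℕ) (A B : Matrix (Fin N) (Fin N) ℝ)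
    (hA : A.IsSymm) (hB : B.IsSymm)
    (lA lB : Fin N → ℝ) (hlA : Monotone lA) (hlB : Monotone lB)
    (hchA : A.charpoly = ∏ i, (X - C (lA i)))
    (hchB : B.charpoly = ∏ i, (X - C (lB i))) :
    ∑ i, |lA i - lB i| ^ 2 ≤ ((A - B) * (A - B)).trace := by
  have hAh : A.IsHermitian := isHermitian_iff_isSymm.mpr hA
  have hBh : B.IsHermitian := isHermitian_iff_isSymm.mpr hB
  have hAB := hAh.trace_mul_le_sum_mul hBh (hlA.monovary hlB) hchA hchB
  have hexpand :
      ((A - B) * (A - B)).trace = (A * A).trace - 2 * (A * B).trace + (B * B).trace := by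
    rw [sub_mul, mul_sub, mul_sub, trace_sub, trace_sub, trace_sub, trace_mul_comm B A]
    ring
  rw [hexpand, hAh.trace_mul_self_eq_sum_sq hchA, hBh.trace_mul_self_eq_sum_sq hchB]
  simp only [sq_abs, sub_sq, sum_add_distrib, sum_sub_distrib, mul_assoc, ← mul_sum]
  linarith
end

section
/- Let A and B be d×d real symmetric matrices with eigenvalues λ^A_1 ≤ ... ≤ λ^A_d and λ^B_1 ≤ ... ≤ λ^B_d listed in nondecreasing order. Then ∑_{i=1}^d |λ^A_i − λ^B_i| ≤ √d · ∑_{i,j=1}^d |A_{ij} − B_{ij}|. -/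
/-!
Diagonalize `A = U diag(a) Uᵀ` and `B = V diag(b) Vᵀ` with `U, V` orthogonal and `a, b` the sorted
eigenvalues. Then `tr(AB) = a ⬝ S b` where `S i j = ((Uᵀ V) i j)²` is doubly stochastic. A linear
function on the Birkhoff polytope is maximized at a permutation matrix, and by the rearrangement
inequality the identity is the best permutation, so `tr(AB) ≤ a ⬝ b`. Expanding the squares gives
the Hoffman–Wielandt inequality `∑ (a i - b i)² ≤ ∑ (A i j - B i j)²`; Cauchy–Schwarz on the left
and `‖·‖₂ ≤ ‖·‖₁` on the right finish.
-/

open Matrix Polynomial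

theorem eq_of_monotone_of_map_univ_val_eq {d : ℕ} {α : Type*} [PartialOrder α] {u v : Fin d → α}
    (hu : Monotone u) (hv : Monotone v)
    (h : Finset.univ.val.map u = Finset.univ.val.map v) : u = v := by
  rw [Fin.univ_val_map, Fin.univ_val_map, Multiset.coe_eq_coe] at h
  exact List.ofFn_inj.1 <|
    h.eq_of_sortedLE (List.sortedLE_ofFn_iff.2 hu) (List.sortedLE_ofFn_iff.2 hv)

theorem Polynomial.roots_prod_X_sub_C_eq_map {ι R : Type*} [Fintype ι] [CommRing R] [IsDomain R]
    (l : ι → R) : (∏ i, (X - C (l i))).roots = Finset.univ.val.map l := by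
  rw [roots_prod _ _ (Finset.prod_ne_zero_iff.2 fun i _ ↦ X_sub_C_ne_zero (l i))]
  simp

namespace Matrix

variable {n R : Type*} [Fintype n] [DecidableEq n]

theorem submatrix_id_mem_orthogonalGroup [CommRing R] {U : Matrix n n R}
    (hU : U ∈ orthogonalGroup n R) (σ : Equiv.Perm n) :
    U.submatrix id σ ∈ orthogonalGroup n R := by
  rw [mem_orthogonalGroup_iff, transpose_submatrix, submatrix_mul_equiv _ _ _ σ,
    (mem_orthogonalGroup_iff _ _).1 hU, submatrix_id_id]

theorem submatrix_mul_diagonal_comp_mul_transpose [CommRing R] (U : Matrix n n R) (a : n → R)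
    (σ : Equiv.Perm n) :
    U.submatrix id σ * diagonal (a ∘ σ) * (U.submatrix id σ)ᵀ = U * diagonal a * Uᵀ := by
  rw [← submatrix_diagonal_equiv, transpose_submatrix, submatrix_mul_equiv _ _ _ σ,
    submatrix_mul_equiv _ _ _ σ, submatrix_id_id]

theorem transpose_mem_orthogonalGroup [CommRing R] {U : Matrix n n R}
    (hU : U ∈ orthogonalGroup n R) : Uᵀ ∈ orthogonalGroup n R := by
  rw [mem_orthogonalGroup_iff, transpose_transpose]
  exact (mem_orthogonalGroup_iff' _ _).1 hU

theorem map_sq_mem_doublyStochastic [CommRing R] [LinearOrder R] [IsStrictOrderedRing R]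
    {W : Matrix n n R} (hW : W ∈ orthogonalGroup n R) : W.map (· ^ 2) ∈ doublyStochastic R n := by
  refine mem_doublyStochastic_iff_sum.2 ⟨fun i j ↦ sq_nonneg _, fun i ↦ ?_, fun j ↦ ?_⟩
  · simpa [mul_apply, one_apply, sq] using congr_fun₂ ((mem_orthogonalGroup_iff _ _).1 hW) i i
  · simpa [mul_apply, one_apply, sq] using congr_fun₂ ((mem_orthogonalGroup_iff' _ _).1 hW) j j

theorem trace_conj_diagonal_mul_conj_diagonal [CommRing R] (U V : Matrix n n R) (a b : n → R) :
    trace (U * diagonal a * Uᵀ * (V * diagonal b * Vᵀ)) = a ⬝ᵥ (Uᵀ * V).map (· ^ 2) *ᵥ b := by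
  have hcycle : trace (U * diagonal a * Uᵀ * (V * diagonal b * Vᵀ))
      = trace (diagonal a * (Uᵀ * V) * diagonal b * (Uᵀ * V)ᵀ) := by
    rw [transpose_mul, transpose_transpose, Matrix.mul_assoc, Matrix.mul_assoc, trace_mul_comm]
    simp only [Matrix.mul_assoc]
  rw [hcycle]
  generalize Uᵀ * V = W
  simp only [trace, diag, mul_apply, diagonal_apply, ite_mul, zero_mul, Finset.sum_ite_eq,
    Finset.mem_univ, if_true, mul_ite, mul_zero, Finset.sum_ite_eq', dotProduct, mulVec,
    transpose_apply, map_apply, Finset.mul_sum]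
  exact Finset.sum_congr rfl fun i _ ↦ Finset.sum_congr rfl fun j _ ↦ by ring

theorem dotProduct_mulVec_le_of_mem_doublyStochastic {S : Matrix n n ℝ}
    (hS : S ∈ doublyStochastic ℝ n) {x y : n → ℝ} (hxy : Monovary x y) :
    x ⬝ᵥ S *ᵥ y ≤ x ⬝ᵥ y := by
  let f : Matrix n n ℝ →ₗ[ℝ] ℝ :=
    { toFun := fun S ↦ x ⬝ᵥ S *ᵥ y
      map_add' := fun _ _ ↦ by simp only [add_mulVec, dotProduct_add]
      map_smul' := fun _ _ ↦ by simp only [smul_mulVec, dotProduct_smul, RingHom.id_apply] }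
  rw [← SetLike.mem_coe, doublyStochastic_eq_convexHull_permMatrix] at hS
  obtain ⟨_, ⟨σ, rfl⟩, hσ⟩ :=
    (f.convexOn convex_univ).exists_ge_of_mem_convexHull (Set.subset_univ _) hS
  refine hσ.trans ?_
  simpa [f, permMatrix_mulVec, dotProduct] using hxy.sum_mul_comp_perm_le_sum_mul (σ := σ)

theorem hoffman_wielandt {U V : Matrix n n ℝ} (hU : U ∈ orthogonalGroup n ℝ)
    (hV : V ∈ orthogonalGroup n ℝ) {a b : n → ℝ} (hab : Monovary a b) :
    ∑ i, (a i - b i) ^ 2 ≤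
      ∑ i, ∑ j, ((U * diagonal a * Uᵀ) i j - (V * diagonal b * Vᵀ) i j) ^ 2 := by
  set A := U * diagonal a * Uᵀ
  set B := V * diagonal b * Vᵀ
  have trace_sq {W : Matrix n n ℝ} (hW : W ∈ orthogonalGroup n ℝ) (c : n → ℝ) :
      trace (W * diagonal c * Wᵀ * (W * diagonal c * Wᵀ)) = c ⬝ᵥ c := by
    rw [trace_conj_diagonal_mul_conj_diagonal, (mem_orthogonalGroup_iff' _ _).1 hW,
      Matrix.map_one (· ^ 2) (zero_pow two_ne_zero) (one_pow 2), one_mulVec]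
  have hAB : trace (A * B) ≤ a ⬝ᵥ b := by
    rw [trace_conj_diagonal_mul_conj_diagonal]
    exact dotProduct_mulVec_le_of_mem_doublyStochastic
      (map_sq_mem_doublyStochastic (mul_mem (transpose_mem_orthogonalGroup hU) hV)) hab
  have hBA : trace (B * A) = trace (A * B) := trace_mul_comm B A
  have hsymm : (A - B)ᵀ = A - B := by
    simp only [A, B, transpose_sub, transpose_mul, transpose_transpose, diagonal_transpose,
      Matrix.mul_assoc]
  have hentries : ∑ i, ∑ j, (A i j - B i j) ^ 2 = trace ((A - B) * (A - B)ᵀ) := by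
    simp only [trace, diag, mul_apply, transpose_apply, Matrix.sub_apply, sq]
  have hexpand : trace ((A - B) * (A - B)) = trace (A * A) - 2 * trace (A * B) + trace (B * B) := by
    rw [sub_mul, mul_sub, mul_sub, trace_sub, trace_sub, trace_sub, hBA]
    ring
  have hvec : ∑ i, (a i - b i) ^ 2 = a ⬝ᵥ a - 2 * (a ⬝ᵥ b) + b ⬝ᵥ b := by
    simp only [dotProduct, Finset.mul_sum, ← Finset.sum_sub_distrib, ← Finset.sum_add_distrib]
    exact Finset.sum_congr rfl fun i _ ↦ by ring
  rw [hentries, hsymm, hexpand, hvec, trace_sq hU, trace_sq hV]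
  linarith

theorem IsHermitian.exists_orthogonal_eq_conj_diagonal {d : ℕ}
    {A : Matrix (Fin d) (Fin d) ℝ} (hA : A.IsHermitian) {l : Fin d → ℝ} (hl : Monotone l)
    (hch : A.charpoly = ∏ i, (X - C (l i))) :
    ∃ U ∈ orthogonalGroup (Fin d) ℝ, A = U * diagonal l * Uᵀ := by
  set σ := Tuple.sort hA.eigenvalues
  have hroots : Finset.univ.val.map l = Finset.univ.val.map (hA.eigenvalues ∘ σ) := by
    rw [← Multiset.map_map, Multiset.map_univ_val_equiv, ← roots_prod_X_sub_C_eq_map, ← hch,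
      hA.roots_charpoly_eq_eigenvalues, RCLike.ofReal_real_eq_id, Function.id_comp]
  have hl_eq : l = hA.eigenvalues ∘ σ :=
    eq_of_monotone_of_map_univ_val_eq hl (Tuple.monotone_sort _) hroots
  set U : Matrix (Fin d) (Fin d) ℝ := ↑hA.eigenvectorUnitary
  have hspec : A = U * diagonal hA.eigenvalues * Uᵀ := by
    have := hA.spectral_theorem
    rwa [Unitary.conjStarAlgAut_apply, RCLike.ofReal_real_eq_id, Function.id_comp,
      star_eq_conjTranspose, conjTranspose_eq_transpose_of_trivial] at this
  refine ⟨U.submatrix id σ, submatrix_id_mem_orthogonalGroup hA.eigenvectorUnitary.2 σ, ?_⟩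
  rw [hl_eq, submatrix_mul_diagonal_comp_mul_transpose, ← hspec]

end Matrix

theorem sum_sum_sq_le_sq_sum_sum_abs {m n : Type*} [Fintype m] [Fintype n] (f : m → n → ℝ) :
    ∑ i, ∑ j, f i j ^ 2 ≤ (∑ i, ∑ j, |f i j|) ^ 2 := by
  simp only [← sq_abs (f _ _), ← Finset.sum_product']
  exact Finset.sum_sq_le_sq_sum_of_nonneg fun _ _ ↦ abs_nonneg _

open Polynomial in
/-- For symmetric `d × d` matrices `A, B` with nondecreasing eigenvalue lists `lA, lB`,
`∑ i, |lA i - lB i| ≤ √d · ∑_{i,j} |A i j - B i j|`. -/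
theorem eigenvalue_l1_perturbation (d : ℕ) (A B : Matrix (Fin d) (Fin d) ℝ)
    (hA : A.IsSymm) (hB : B.IsSymm)
    (lA lB : Fin d → ℝ) (hlA : Monotone lA) (hlB : Monotone lB)
    (hchA : A.charpoly = ∏ i, (X - C (lA i)))
    (hchB : B.charpoly = ∏ i, (X - C (lB i))) :
    ∑ i, |lA i - lB i| ≤ Real.sqrt d * ∑ i, ∑ j, |A i j - B i j| := by
  obtain ⟨U, hU, hAU⟩ :=
    (isHermitian_iff_isSymm.2 hA).exists_orthogonal_eq_conj_diagonal hlA hchA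
  obtain ⟨V, hV, hBV⟩ :=
    (isHermitian_iff_isSymm.2 hB).exists_orthogonal_eq_conj_diagonal hlB hchB
  have hHW : ∑ i, (lA i - lB i) ^ 2 ≤ ∑ i, ∑ j, (A i j - B i j) ^ 2 := by
    rw [hAU, hBV]
    exact hoffman_wielandt hU hV (hlA.monovary hlB)
  refine le_of_pow_le_pow_left₀ two_ne_zero (by positivity) ?_
  calc (∑ i, |lA i - lB i|) ^ 2 ≤ d * ∑ i, (lA i - lB i) ^ 2 := by
        simpa [sq_abs] using sq_sum_le_card_mul_sum_sq (s := Finset.univ)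
          (f := fun i ↦ |lA i - lB i|)
    _ ≤ d * (∑ i, ∑ j, |A i j - B i j|) ^ 2 := by
        gcongr
        exact hHW.trans (sum_sum_sq_le_sq_sum_sum_abs _)
    _ = (Real.sqrt d * ∑ i, ∑ j, |A i j - B i j|) ^ 2 := by
        rw [mul_pow, Real.sq_sqrt (Nat.cast_nonneg d)]
end

section
/- Let f : [0,2π] → ℝ be continuous with f(0) = f(2π) and define its Fourier coefficients a_k = (1/π)∫₀^{2π} cos(kt) f(t) dt and b_k = (1/π)∫₀^{2π} sin(kt) f(t) dt. Then for every t ∈ [0,2π], the Fejér means S_N(t) = a₀/2 + ∑_{k=1}^N (1 − k/N)(a_k cos(kt) + b_k sin(kt)) converge to f(t) as N → ∞, uniformly in t. -/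
/-!
The Fejér mean `σ_N f` is the convolution of `f` with the Fejér kernel
`K_N(u) = 1 + ∑_{k=1}^{N} 2 (1 - k/N) cos (k u)`, and the closed form
`sin² (u/2) · N K_N(u) = sin² (N u / 2)` (a telescoping of Dirichlet kernels) shows that
`K_N ≥ 0` and `K_N(u) ≤ 1 / (N sin² (δ/2))` for `δ ≤ |u| ≤ π`, while `∫_{-π}^{π} K_N = 2π`.
Hence `σ_N f (t) - f t` is an average of `f (t - u) - f t` against the probability density
`K_N / 2π`: uniform continuity of `f` bounds the part `|u| ≤ δ`, and the kernel bound makes the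
rest `O(1/N)`, uniformly in `t`.
-/

open Real Filter Function intervalIntegral Topology
open MeasureTheory (volume)

theorem sin_sq_add_sub_sin_sq_sub (x y : ℝ) :
    sin (x + y) ^ 2 - sin (x - y) ^ 2 = sin (2 * x) * sin (2 * y) := by
  rw [sin_add, sin_sub, sin_two_mul, sin_two_mul]
  ring

theorem sin_half_mul_dirichlet_sum (N : ℕ) (u : ℝ) :
    sin (u / 2) * (1 + ∑ k ∈ Finset.Icc 1 N, 2 * cos (k * u)) = sin ((N + 1 / 2) * u) := by
  induction N with
  | zero => simp [div_eq_inv_mul]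
  | succ n ih =>
    rw [Finset.sum_Icc_succ_top (by omega), ← add_assoc, mul_add, ih]
    have := sin_sub_sin (((n + 1 : ℕ) + 1 / 2) * u) ((n + 1 / 2) * u)
    push_cast at this ⊢
    rw [show ((n + 1 + 1 / 2) * u - (n + 1 / 2) * u) / 2 = u / 2 by ring,
      show ((n + 1 + 1 / 2) * u + (n + 1 / 2) * u) / 2 = (n + 1) * u by ring] at this
    linear_combination -this

noncomputable def fejerKernel (N : ℕ) (u : ℝ) : ℝ :=
  1 + ∑ k ∈ Finset.Icc 1 N, 2 * (1 - k / N) * cos (k * u)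

theorem natCast_mul_fejerKernel (N : ℕ) (u : ℝ) :
    N * fejerKernel N u = N + ∑ k ∈ Finset.Icc 1 N, 2 * (N - k) * cos (k * u) := by
  rcases eq_or_ne N 0 with rfl | hN
  · simp
  rw [fejerKernel, mul_add, mul_one, Finset.mul_sum]
  congr 1
  refine Finset.sum_congr rfl fun k _ => ?_
  field_simp

theorem sin_sq_half_mul_fejerKernel (N : ℕ) (u : ℝ) :
    sin (u / 2) ^ 2 * (N * fejerKernel N u) = sin (N * u / 2) ^ 2 := by
  rw [natCast_mul_fejerKernel]
  induction N with
  | zero => simp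
  | succ n ih =>
    have hsplit : ∑ k ∈ Finset.Icc 1 n, 2 * ((n + 1 : ℕ) - k : ℝ) * cos (k * u)
        = ∑ k ∈ Finset.Icc 1 n, 2 * (n - k : ℝ) * cos (k * u)
          + ∑ k ∈ Finset.Icc 1 n, 2 * cos (k * u) := by
      rw [← Finset.sum_add_distrib]
      refine Finset.sum_congr rfl fun k _ => ?_
      push_cast; ring
    rw [Finset.sum_Icc_succ_top (by omega), hsplit]
    have hdirichlet := sin_half_mul_dirichlet_sum n u
    have hsq : sin ((n + 1 : ℕ) * u / 2) ^ 2 - sin (n * u / 2) ^ 2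
        = sin ((n + 1 / 2) * u) * sin (u / 2) := by
      have h := sin_sq_add_sub_sin_sq_sub ((n + 1 / 2) * u / 2) (u / 4)
      push_cast
      convert h using 3 <;> ring_nf
    push_cast at hsq ⊢
    linear_combination ih + sin (u / 2) * hdirichlet - hsq

theorem fejerKernel_nonneg (N : ℕ) (u : ℝ) : 0 ≤ fejerKernel N u := by
  rcases eq_or_ne (sin (u / 2)) 0 with hs | hs
  · -- the closed form is silent where `sin (u / 2) = 0`, but there every `cos (k * u)` is `1`
    obtain ⟨m, hm⟩ := sin_eq_zero_iff.mp hs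
    have hcos (k : ℕ) : cos (k * u) = 1 := by
      rw [show u = m * (2 * π) by linarith, ← mul_assoc]
      exact_mod_cast cos_int_mul_two_pi (k * m)
    refine add_nonneg zero_le_one (Finset.sum_nonneg fun k hk => ?_)
    have hkN : (k : ℝ) / N ≤ 1 :=
      div_le_one_of_le₀ (by exact_mod_cast (Finset.mem_Icc.mp hk).2) N.cast_nonneg
    rw [hcos, mul_one]
    linarith
  · rcases eq_or_ne N 0 with rfl | hN
    · simp [fejerKernel]
    have h := sin_sq_half_mul_fejerKernel N u
    have : 0 ≤ sin (u / 2) ^ 2 * N * fejerKernel N u := by rw [mul_assoc, h]; positivity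
    exact nonneg_of_mul_nonneg_right this (by positivity)

theorem sin_sq_half_le_sin_sq_half {δ u : ℝ} (hδ : 0 ≤ δ) (hδu : δ ≤ |u|)
    (hu : |u| ≤ π) : sin (δ / 2) ^ 2 ≤ sin (u / 2) ^ 2 := by
  have h (x : ℝ) : sin (x / 2) ^ 2 = 1 / 2 - cos x / 2 := by
    rw [sin_sq, cos_sq, show 2 * (x / 2) = x by ring]; ring
  rw [h, h, ← cos_abs u]
  linarith [cos_le_cos_of_nonneg_of_le_pi hδ hu hδu]

theorem fejerKernel_le_of_le_abs {N : ℕ} (hN : N ≠ 0) {δ u : ℝ} (hδ : 0 < δ)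
    (hδu : δ ≤ |u|) (hu : |u| ≤ π) : fejerKernel N u ≤ 1 / sin (δ / 2) ^ 2 / N := by
  have hsδ : 0 < sin (δ / 2) ^ 2 := by
    have : 0 < sin (δ / 2) := sin_pos_of_pos_of_lt_pi (by linarith) (by linarith)
    positivity
  have hsu := sin_sq_half_le_sin_sq_half hδ.le hδu hu
  have hN' : (0 : ℝ) < N := by positivity
  rw [div_div, le_div_iff₀ (by positivity)]
  calc fejerKernel N u * (sin (δ / 2) ^ 2 * N)
      = sin (δ / 2) ^ 2 * (N * fejerKernel N u) := by ring
    _ ≤ sin (u / 2) ^ 2 * (N * fejerKernel N u) :=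
        mul_le_mul_of_nonneg_right hsu (mul_nonneg N.cast_nonneg (fejerKernel_nonneg N u))
    _ = sin (N * u / 2) ^ 2 := sin_sq_half_mul_fejerKernel N u
    _ ≤ 1 := sin_sq_le_one _

@[fun_prop]
theorem continuous_fejerKernel (N : ℕ) : Continuous (fejerKernel N) := by
  unfold fejerKernel; fun_prop

theorem periodic_fejerKernel (N : ℕ) : Periodic (fejerKernel N) (2 * π) := by
  intro u
  simp only [fejerKernel, mul_add, cos_add_nat_mul_two_pi]

theorem integral_cos_natCast_mul {k : ℕ} (hk : k ≠ 0) : ∫ u in -π..π, cos (k * u) = 0 := by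
  rw [integral_comp_mul_left (fun x => cos x) (by exact_mod_cast hk), integral_cos]
  simp [sin_nat_mul_pi]

theorem integral_fejerKernel (N : ℕ) : ∫ u in -π..π, fejerKernel N u = 2 * π := by
  have hcont (k : ℕ) : Continuous fun u => 2 * (1 - k / N) * cos (k * u) := by fun_prop
  unfold fejerKernel
  rw [integral_add intervalIntegrable_const
      ((continuous_finsetSum _ fun k _ => hcont k).intervalIntegrable _ _),
    integral_finsetSum fun k _ => (hcont k).intervalIntegrable _ _,
    Finset.sum_eq_zero fun k hk => by
      rw [integral_const_mul,
        integral_cos_natCast_mul (Nat.one_le_iff_ne_zero.mp (Finset.mem_Icc.mp hk).1), mul_zero]]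
  simp
  ring

theorem Function.Periodic.intervalIntegral_comp_sub_eq {E : Type*} [NormedAddCommGroup E]
    [NormedSpace ℝ E] {H : ℝ → E} {T : ℝ} (hH : Periodic H T) (t a : ℝ) :
    ∫ s in 0..T, H (t - s) = ∫ u in a..a + T, H u := by
  rw [integral_comp_sub_left, sub_zero, ← hH.intervalIntegral_add_eq (t - T), sub_add_cancel]

theorem exists_continuous_periodic_eqOn {B : Type*} [TopologicalSpace B] {f : ℝ → B}
    {a T : ℝ} (hT : 0 < T) (hf : ContinuousOn f (Set.Icc a (a + T))) (hfa : f a = f (a + T)) :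
    ∃ g : ℝ → B, Continuous g ∧ Periodic g T ∧ Set.EqOn g f (Set.Icc a (a + T)) := by
  have := Fact.mk hT
  refine ⟨fun x => AddCircle.liftIco T a f x,
    (AddCircle.liftIco_continuous hfa hf).comp (AddCircle.continuous_mk' T),
    fun x => by simp only [AddCircle.coe_add_period], fun x hx => ?_⟩
  rcases hx.2.lt_or_eq with hlt | rfl
  · exact AddCircle.liftIco_coe_apply ⟨hx.1, hlt⟩
  · simp only [AddCircle.coe_add_period]
    rw [AddCircle.liftIco_coe_apply (by simp [hT]), hfa]

theorem Function.Periodic.uniformContinuous_of_continuous {E : Type*} [PseudoMetricSpace E]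
    {g : ℝ → E} {T : ℝ} (hg : Periodic g T) (hT : 0 < T) (hc : Continuous g) :
    UniformContinuous g := by
  have := Fact.mk hT
  have hlift : Continuous hg.lift := (QuotientAddGroup.isQuotientMap_mk _).continuous_iff.2 hc
  have hmk : UniformContinuous ((↑) : ℝ → AddCircle T) :=
    uniformContinuous_of_continuousAt_zero (QuotientAddGroup.mk' _)
      (AddCircle.continuous_mk' T).continuousAt
  exact (CompactSpace.uniformContinuous_of_continuous hlift).comp hmk

noncomputable def cosCoeff (f : ℝ → ℝ) (k : ℕ) : ℝ :=
  1 / π * ∫ t in 0..2 * π, cos (k * t) * f t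

noncomputable def sinCoeff (f : ℝ → ℝ) (k : ℕ) : ℝ :=
  1 / π * ∫ t in 0..2 * π, sin (k * t) * f t

noncomputable def fejerMean (f : ℝ → ℝ) (N : ℕ) (t : ℝ) : ℝ :=
  cosCoeff f 0 / 2 + ∑ k ∈ Finset.Icc 1 N,
    (1 - (k : ℝ) / N) * (cosCoeff f k * cos (k * t) + sinCoeff f k * sin (k * t))

theorem fejerMean_congr {f g : ℝ → ℝ} (h : Set.EqOn f g (Set.Icc 0 (2 * π))) :
    fejerMean f = fejerMean g := by
  have hint (φ : ℝ → ℝ) : ∫ t in 0..2 * π, φ t * f t = ∫ t in 0..2 * π, φ t * g t :=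
    integral_congr fun t ht => by
      rw [Set.uIcc_of_le two_pi_pos.le] at ht
      simp only [h ht]
  have hcos : cosCoeff f = cosCoeff g := funext fun k => by rw [cosCoeff, cosCoeff, hint]
  have hsin : sinCoeff f = sinCoeff g := funext fun k => by rw [sinCoeff, sinCoeff, hint]
  unfold fejerMean
  rw [hcos, hsin]

theorem cosCoeff_mul_cos_add_sinCoeff_mul_sin {f : ℝ → ℝ}
    (hf : IntervalIntegrable f volume 0 (2 * π)) (k : ℕ) (t : ℝ) :
    cosCoeff f k * cos (k * t) + sinCoeff f k * sin (k * t)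
      = 1 / π * ∫ s in 0..2 * π, cos (k * (t - s)) * f s := by
  have hcos (s : ℝ) : cos (k * (t - s)) * f s
      = cos (k * t) * (cos (k * s) * f s) + sin (k * t) * (sin (k * s) * f s) := by
    rw [mul_sub, cos_sub]; ring
  simp only [hcos]
  rw [integral_add ((hf.continuousOn_mul (by fun_prop)).const_mul _)
      ((hf.continuousOn_mul (by fun_prop)).const_mul _), integral_const_mul, integral_const_mul,
    cosCoeff, sinCoeff]
  ring

theorem fejerMean_eq_integral {f : ℝ → ℝ} (hf : IntervalIntegrable f volume 0 (2 * π))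
    (N : ℕ) (t : ℝ) :
    fejerMean f N t = (2 * π)⁻¹ * ∫ s in 0..2 * π, fejerKernel N (t - s) * f s := by
  have hterm (k : ℕ) : IntervalIntegrable (fun s => 2 * (1 - k / N) * (cos (k * (t - s)) * f s))
      volume 0 (2 * π) :=
    (hf.continuousOn_mul (by fun_prop)).const_mul _
  have hK (s : ℝ) : fejerKernel N (t - s) * f s
      = f s + ∑ k ∈ Finset.Icc 1 N, 2 * (1 - k / N) * (cos (k * (t - s)) * f s) := by
    rw [fejerKernel, add_mul, one_mul, Finset.sum_mul]
    simp only [mul_assoc]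
  simp only [hK]
  have hsum : IntervalIntegrable
      (fun s => ∑ k ∈ Finset.Icc 1 N, 2 * (1 - k / N) * (cos (k * (t - s)) * f s))
      volume 0 (2 * π) := by
    simpa only [Finset.sum_fn] using IntervalIntegrable.sum _ fun k _ => hterm k
  rw [integral_add hf hsum, integral_finsetSum fun k _ => hterm k, fejerMean, mul_add,
    Finset.mul_sum]
  congr 1
  · simp only [cosCoeff, Nat.cast_zero, zero_mul, cos_zero, one_mul]
    ring
  · refine Finset.sum_congr rfl fun k _ => ?_
    rw [cosCoeff_mul_cos_add_sinCoeff_mul_sin hf, integral_const_mul]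
    ring

theorem fejerMean_sub_eq_integral {f : ℝ → ℝ} (hf : Continuous f) (hper : Periodic f (2 * π))
    (N : ℕ) (t : ℝ) :
    fejerMean f N t - f t
      = (2 * π)⁻¹ * ∫ u in -π..π, fejerKernel N u * (f (t - u) - f t) := by
  have hH : Periodic (fun u => fejerKernel N u * f (t - u)) (2 * π) := fun u => by
    simp only
    rw [periodic_fejerKernel N u, ← sub_sub, hper.sub_eq]
  have hconv := hH.intervalIntegral_comp_sub_eq t (-π)
  simp only [sub_sub_cancel, neg_add_eq_sub, show 2 * π - π = π by ring] at hconv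
  rw [fejerMean_eq_integral (hf.intervalIntegrable _ _), hconv]
  simp_rw [mul_sub]
  rw [integral_sub
    ((by fun_prop : Continuous fun u => fejerKernel N u * f (t - u)).intervalIntegrable _ _)
    ((by fun_prop : Continuous fun u => fejerKernel N u * f t).intervalIntegrable _ _),
    integral_mul_const, integral_fejerKernel]
  field_simp

theorem abs_fejerMean_sub_le {f : ℝ → ℝ} (hf : Continuous f) (hper : Periodic f (2 * π))
    {M δ ε : ℝ} (hM : ∀ x, |f x| ≤ M) (hδ : 0 < δ)
    (hε : ∀ t u, |u| ≤ δ → |f (t - u) - f t| ≤ ε) {N : ℕ} (hN : N ≠ 0) (t : ℝ) :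
    |fejerMean f N t - f t| ≤ ε + 2 * M / sin (δ / 2) ^ 2 / N := by
  set C := 2 * M / sin (δ / 2) ^ 2 / N
  have hε0 : 0 ≤ ε := by simpa using hε 0 0 (by simpa using hδ.le)
  have hM0 : 0 ≤ M := (abs_nonneg _).trans (hM 0)
  have hC0 : 0 ≤ C := by positivity
  have hpt : ∀ u ∈ Set.Ioc (-π) π,
      ‖fejerKernel N u * (f (t - u) - f t)‖ ≤ ε * fejerKernel N u + C := by
    intro u hu
    have hK0 := fejerKernel_nonneg N u
    rw [Real.norm_eq_abs, abs_mul, abs_of_nonneg hK0]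
    rcases le_or_gt |u| δ with hnear | hfar
    · nlinarith [hε t u hnear]
    · have hdiff : |f (t - u) - f t| ≤ 2 * M := by
        linarith [abs_sub (f (t - u)) (f t), hM (t - u), hM t]
      have hbound := fejerKernel_le_of_le_abs hN hδ hfar.le (abs_le.2 ⟨hu.1.le, hu.2⟩)
      calc fejerKernel N u * |f (t - u) - f t| ≤ 1 / sin (δ / 2) ^ 2 / N * (2 * M) :=
            mul_le_mul hbound hdiff (abs_nonneg _) (by positivity)
        _ = C := by ring
        _ ≤ ε * fejerKernel N u + C := le_add_of_nonneg_left (mul_nonneg hε0 hK0)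
  have hint := norm_integral_le_of_norm_le (μ := volume) (by linarith [pi_pos])
    (Eventually.of_forall hpt)
    ((by fun_prop : Continuous fun u => ε * fejerKernel N u + C).intervalIntegrable _ _)
  rw [integral_add ((by fun_prop : Continuous fun u => ε * fejerKernel N u).intervalIntegrable _ _)
      intervalIntegrable_const,
    integral_const_mul, integral_fejerKernel, intervalIntegral.integral_const, smul_eq_mul,
    Real.norm_eq_abs] at hint
  rw [fejerMean_sub_eq_integral hf hper, abs_mul, abs_of_pos (by positivity)]
  calc (2 * π)⁻¹ * |∫ u in -π..π, fejerKernel N u * (f (t - u) - f t)|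
      ≤ (2 * π)⁻¹ * (ε * (2 * π) + (π - -π) * C) := by gcongr
    _ = ε + C := by field_simp; ring

theorem tendstoUniformly_fejerMean {f : ℝ → ℝ} (hf : Continuous f)
    (hper : Periodic f (2 * π)) :
    TendstoUniformly (fejerMean f) f atTop := by
  rw [Metric.tendstoUniformly_iff]
  intro ε hε
  obtain ⟨M, hM⟩ :=
    isBounded_iff_forall_norm_le.1 (hper.isBounded_of_continuous two_pi_pos.ne' hf)
  obtain ⟨δ, hδ, hδf⟩ := Metric.uniformContinuous_iff.1
    (hper.uniformContinuous_of_continuous two_pi_pos hf) (ε / 2) (half_pos hε)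
  have hε' : ∀ t u, |u| ≤ δ / 2 → |f (t - u) - f t| ≤ ε / 2 := fun t u hu => by
    have := hδf (a := t - u) (b := t) (by rw [dist_eq, sub_sub_cancel_left, abs_neg]; linarith)
    exact (dist_eq _ _ ▸ this).le
  have hC := (tendsto_const_nhds (x := ε / 2)).add
    (tendsto_const_div_atTop_nhds_zero_nat (2 * M / sin (δ / 2 / 2) ^ 2))
  rw [add_zero] at hC
  filter_upwards [hC.eventually (gt_mem_nhds (half_lt_self hε)), eventually_ne_atTop 0]
    with N hN hN0 t
  rw [dist_comm, dist_eq]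
  refine lt_of_le_of_lt ?_ hN
  exact abs_fejerMean_sub_le hf hper (fun x => by simpa using hM (f x) ⟨x, rfl⟩) (half_pos hδ)
    hε' hN0 t

open Real Filter intervalIntegral in
/-- **Fejér's theorem.** For a continuous `2π`-periodic function `f` on `[0, 2π]`
(`f 0 = f (2π)`), the Fejér means of its Fourier series converge to `f` uniformly
on `[0, 2π]`. -/
theorem fejer_uniform_convergence (f : ℝ → ℝ)
    (hf : ContinuousOn f (Set.Icc 0 (2 * π))) (hper : f 0 = f (2 * π))
    (a b : ℕ → ℝ)
    (ha : ∀ k : ℕ, a k = (1 / π) * ∫ t in (0 : ℝ)..(2 * π), Real.cos (k * t) * f t)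
    (hb : ∀ k : ℕ, b k = (1 / π) * ∫ t in (0 : ℝ)..(2 * π), Real.sin (k * t) * f t) :
    TendstoUniformlyOn
      (fun (N : ℕ) (t : ℝ) => a 0 / 2 + ∑ k ∈ Finset.Icc 1 N,
        (1 - (k : ℝ) / N) * (a k * Real.cos (k * t) + b k * Real.sin (k * t)))
      f atTop (Set.Icc 0 (2 * π)) := by
  obtain ⟨g, hg, hgper, hgf⟩ := exists_continuous_periodic_eqOn two_pi_pos (a := 0)
    (by rwa [zero_add]) (by rwa [zero_add])
  rw [zero_add] at hgf
  obtain rfl : a = cosCoeff f := funext ha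
  obtain rfl : b = sinCoeff f := funext hb
  change TendstoUniformlyOn (fejerMean f) f atTop _
  rw [fejerMean_congr hgf.symm]
  exact (tendstoUniformly_fejerMean hg hgper).tendstoUniformlyOn.congr_right hgf
end
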